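/- arXiv:2211.09416 — 2 statements merged into one kernel-verified Lean document; each statement's English description precedes it below -/
import Mathlib

section
/- If |c_β| e^{⟨β,x⟩} > Σ_{α ≠ β} |c_α| e^{⟨α,x⟩} for all x in a connected set S ⊂ ℝ^n and a fixed exponent β, then S is contained in a single connected component of the amoeba complement ᶜ𝒜_p. -/
open Real

noncomputable def evalL (n : ℕ) (A : Finset (Fin n → ℤ)) (c : (Fin n → ℤ) → ℂ)
    (z : Fin n → ℂ) : ℂ :=
  ∑ α ∈ A, c α * ∏ j, z j ^ α j

/-- The amoeba: image under `Log(z) = (ln|z₁|,…,ln|zₙ|)` of the zero locus in `(ℂ*)ⁿ`. -/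
def amoebaOf (n : ℕ) (f : (Fin n → ℂ) → ℂ) : Set (Fin n → ℝ) :=
  {x | ∃ z : Fin n → ℂ, (∀ j, z j ≠ 0) ∧ f z = 0 ∧
        ∀ j, Real.log (‖z j‖) = x j}

/-! At a point `x` where the `β`-term is lopsidedly dominant, every `z` with `Log z = x` has
`‖c_β z^β‖ > Σ_{α ≠ β} ‖c_α z^α‖`, so by the triangle inequality `p(z) ≠ 0`. Hence `S` misses the
amoeba, and a preconnected subset of the complement lies in the component of each of its points. -/

theorem Finset.sum_ne_zero_of_sum_norm_erase_lt {ι E : Type*} [SeminormedAddCommGroup E]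
    [DecidableEq ι] {s : Finset ι} {f : ι → E} {i : ι} (hi : i ∈ s)
    (h : ∑ j ∈ s.erase i, ‖f j‖ < ‖f i‖) : ∑ j ∈ s, f j ≠ 0 := by
  intro hsum
  rw [← s.add_sum_erase f hi] at hsum
  have hfi : f i = -∑ j ∈ s.erase i, f j := eq_neg_of_add_eq_zero_left hsum
  have : ‖f i‖ ≤ ∑ j ∈ s.erase i, ‖f j‖ := by
    simpa only [hfi, norm_neg] using norm_sum_le (s.erase i) f
  exact this.not_gt h

theorem norm_prod_zpow_eq_exp {ι 𝕜 : Type*} [Fintype ι] [NormedField 𝕜] {z : ι → 𝕜}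
    (hz : ∀ j, z j ≠ 0) (α : ι → ℤ) :
    ‖∏ j, z j ^ α j‖ = exp (∑ j, (α j : ℝ) * log ‖z j‖) := by
  rw [norm_prod, exp_sum]
  refine Finset.prod_congr rfl fun j _ => ?_
  rw [norm_zpow, ← rpow_intCast, rpow_def_of_pos (norm_pos_iff.mpr (hz j)), mul_comm]

theorem notMem_amoebaOf_of_lopsided {n : ℕ} {A : Finset (Fin n → ℤ)} {c : (Fin n → ℤ) → ℂ}
    {β : Fin n → ℤ} (hβ : β ∈ A) {x : Fin n → ℝ}
    (hlop : ∑ α ∈ A.erase β, ‖c α‖ * exp (∑ j, (α j : ℝ) * x j) <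
      ‖c β‖ * exp (∑ j, (β j : ℝ) * x j)) :
    x ∉ amoebaOf n (evalL n A c) := by
  rintro ⟨z, hz, hpz, hlog⟩
  have hterm : ∀ α, ‖c α * ∏ j, z j ^ α j‖ = ‖c α‖ * exp (∑ j, (α j : ℝ) * x j) := by
    intro α
    simp only [norm_mul, norm_prod_zpow_eq_exp hz, hlog]
  exact Finset.sum_ne_zero_of_sum_norm_erase_lt hβ (by simpa only [hterm] using hlop) hpz

/-- If a fixed term β is lopsidedly dominant at every point of a connected set S,
then S lies in a single connected component of the amoeba complement. -/
theorem lopsided_connected_subset_component (n : ℕ) (A : Finset (Fin n → ℤ))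
    (c : (Fin n → ℤ) → ℂ) (β : Fin n → ℤ) (hβ : β ∈ A)
    (S : Set (Fin n → ℝ)) (hS : IsConnected S)
    (hlop : ∀ x ∈ S,
      ∑ α ∈ A.erase β, ‖c α‖ * Real.exp (∑ j, (α j : ℝ) * x j) <
        ‖c β‖ * Real.exp (∑ j, (β j : ℝ) * x j)) :
    S ⊆ (amoebaOf n (evalL n A c))ᶜ ∧
      ∀ x ∈ S, S ⊆ connectedComponentIn (amoebaOf n (evalL n A c))ᶜ x := by
  have hcompl : S ⊆ (amoebaOf n (evalL n A c))ᶜ :=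
    fun x hx => notMem_amoebaOf_of_lopsided hβ (hlop x hx)
  exact ⟨hcompl, fun x hx => hS.isPreconnected.subset_connectedComponentIn hx hcompl⟩
end

section
/- For nonzero complex numbers c₀, c₁, c₂ and positive integer n, the complement of the amoeba of the trinomial p(z₁,z₂) = c₀ + c₁ z₁^n + c₂ z₂^n has at least three connected components, one unbounded in each of the directions (0,0), (n,0), (0,n) (i.e., containing points where the corresponding monomial is lopsidedly dominant). -/
/-!
Put `a = ‖c₀‖`, `b = ‖c₁‖ e^{n x₀}`, `c = ‖c₂‖ e^{n x₁}`. Taking `n`-th roots, `x` lies in the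
amoeba exactly when some complex numbers of moduli `b` and `c` add up to `-c₀`, and by the
intermediate value theorem on the circle of radius `b` this happens exactly when `a, b, c` satisfy
the three triangle inequalities. So the complement of the amoeba is the union of the three open
lopsided regions, which are pairwise disjoint as `a, b, c ≥ 0`; a connected subset of the
complement therefore lies in one of them. Each region is reached by sending `x` to infinity in
the appropriate direction.
-/

open Real

open Filter

theorem norm_mul_pow_eq_mul_exp_log {z : ℂ} (hz : z ≠ 0) (c : ℂ) (n : ℕ) :
    ‖c * z ^ n‖ = ‖c‖ * exp (n * Real.log ‖z‖) := by
  rw [norm_mul, norm_pow, exp_nat_mul, exp_log (norm_pos_iff.2 hz)]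

theorem exists_mul_pow_eq_of_norm_eq {n : ℕ} (hn : n ≠ 0) {c u : ℂ} (hc : c ≠ 0)
    {x : ℝ} (hu : ‖u‖ = ‖c‖ * exp (n * x)) :
    ∃ z : ℂ, z ≠ 0 ∧ c * z ^ n = u ∧ Real.log ‖z‖ = x := by
  obtain ⟨z, hz⟩ := IsAlgClosed.exists_pow_nat_eq (u / c) (Nat.pos_of_ne_zero hn)
  have hu₀ : u ≠ 0 := norm_pos_iff.1 (by rw [hu]; positivity)
  have hz₀ : z ≠ 0 := by
    rintro rfl
    exact div_ne_zero hu₀ hc (hz ▸ zero_pow hn)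
  have hnorm : ‖z‖ ^ n = exp x ^ n := by
    rw [← norm_pow, hz, norm_div, hu, ← exp_nat_mul]
    field_simp [norm_ne_zero_iff.2 hc]
  refine ⟨z, hz₀, by rw [hz, mul_div_cancel₀ _ hc], ?_⟩
  rw [pow_left_inj₀ (norm_nonneg _) (exp_pos x).le hn |>.1 hnorm, log_exp]

theorem mem_amoebaOf_trinomial_iff_exists {n : ℕ} (hn : n ≠ 0) (c₀ : ℂ) {c₁ c₂ : ℂ}
    (h₁ : c₁ ≠ 0) (h₂ : c₂ ≠ 0) (x : Fin 2 → ℝ) :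
    x ∈ amoebaOf 2 (fun z => c₀ + c₁ * z 0 ^ n + c₂ * z 1 ^ n) ↔
      ∃ u v : ℂ, ‖u‖ = ‖c₁‖ * exp (n * x 0) ∧ ‖v‖ = ‖c₂‖ * exp (n * x 1) ∧ u + v = -c₀ := by
  constructor
  · rintro ⟨z, hz, hf, hx⟩
    refine ⟨c₁ * z 0 ^ n, c₂ * z 1 ^ n, ?_, ?_, by linear_combination hf⟩
    · rw [norm_mul_pow_eq_mul_exp_log (hz 0), hx]
    · rw [norm_mul_pow_eq_mul_exp_log (hz 1), hx]
  · rintro ⟨u, v, hu, hv, huv⟩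
    obtain ⟨z₀, hz₀, rfl, hx₀⟩ := exists_mul_pow_eq_of_norm_eq hn h₁ hu
    obtain ⟨z₁, hz₁, rfl, hx₁⟩ := exists_mul_pow_eq_of_norm_eq hn h₂ hv
    refine ⟨![z₀, z₁], fun j => ?_, ?_, fun j => ?_⟩
    · fin_cases j <;> assumption
    · simp only [Matrix.cons_val_zero, Matrix.cons_val_one]
      linear_combination huv
    · fin_cases j <;> assumption

open Complex in
theorem exists_norm_ofReal_sub_mul_exp_eq {a b c : ℝ} (h₁ : |a - b| ≤ c) (h₂ : c ≤ a + b) :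
    ∃ θ : ℝ, ‖(a : ℂ) - b * exp (θ * I)‖ = c := by
  have hcont : ContinuousOn (fun θ : ℝ => ‖(a : ℂ) - b * exp (θ * I)‖) (Set.Icc 0 π) := by
    fun_prop
  have h0 : ‖(a : ℂ) - b * exp ((0 : ℝ) * I)‖ = |a - b| := by
    simp [← ofReal_sub, Complex.norm_real]
  have hπ : ‖(a : ℂ) - b * exp (π * I)‖ = |a + b| := by
    simp [← ofReal_add, Complex.norm_real]
  obtain ⟨θ, -, hθ⟩ := intermediate_value_Icc pi_pos.le hcont
    ⟨h0.symm ▸ h₁, hπ.symm ▸ h₂.trans (le_abs_self _)⟩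
  exact ⟨θ, hθ⟩

open Complex in
theorem Complex.exists_norm_eq_add_eq_iff (w : ℂ) {b c : ℝ} (hb : 0 ≤ b) :
    (∃ u v : ℂ, ‖u‖ = b ∧ ‖v‖ = c ∧ u + v = w) ↔
      ‖w‖ ≤ b + c ∧ b ≤ ‖w‖ + c ∧ c ≤ ‖w‖ + b := by
  constructor
  · rintro ⟨u, v, rfl, rfl, rfl⟩
    refine ⟨norm_add_le u v, ?_, ?_⟩
    · simpa using norm_sub_le (u + v) v
    · simpa using norm_sub_le (u + v) u
  · rintro ⟨h₁, h₂, h₃⟩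
    obtain ⟨θ, hθ⟩ := exists_norm_ofReal_sub_mul_exp_eq (a := ‖w‖)
      (abs_sub_le_iff.2 ⟨by linarith, by linarith⟩) h₃
    set e := exp (w.arg * I)
    have he : ‖e‖ = 1 := norm_exp_ofReal_mul_I _
    refine ⟨b * exp (θ * I) * e, (‖w‖ - b * exp (θ * I)) * e, ?_, ?_, ?_⟩
    · simp [he, norm_exp_ofReal_mul_I, Complex.norm_real, abs_of_nonneg hb]
    · rw [norm_mul, he, mul_one, hθ]
    · rw [← add_mul, add_sub_cancel, norm_mul_exp_arg_mul_I]

theorem mem_amoebaOf_trinomial_iff {n : ℕ} (hn : n ≠ 0) (c₀ : ℂ) {c₁ c₂ : ℂ}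
    (h₁ : c₁ ≠ 0) (h₂ : c₂ ≠ 0) (x : Fin 2 → ℝ) :
    x ∈ amoebaOf 2 (fun z => c₀ + c₁ * z 0 ^ n + c₂ * z 1 ^ n) ↔
      ‖c₀‖ ≤ ‖c₁‖ * exp (n * x 0) + ‖c₂‖ * exp (n * x 1) ∧
      ‖c₁‖ * exp (n * x 0) ≤ ‖c₀‖ + ‖c₂‖ * exp (n * x 1) ∧
      ‖c₂‖ * exp (n * x 1) ≤ ‖c₀‖ + ‖c₁‖ * exp (n * x 0) := by
  rw [mem_amoebaOf_trinomial_iff_exists hn c₀ h₁ h₂,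
    Complex.exists_norm_eq_add_eq_iff _ (by positivity), norm_neg]

theorem exists_lt_mul_exp_mul {a r : ℝ} (ha : 0 < a) (hr : 0 < r) (K : ℝ) :
    ∃ s : ℝ, K < a * exp (r * s) :=
  ((tendsto_exp_atTop.comp (tendsto_id.const_mul_atTop hr)).const_mul_atTop ha
    |>.eventually_gt_atTop K).exists

theorem exists_mul_exp_mul_lt (a : ℝ) {r K : ℝ} (hr : 0 < r) (hK : 0 < K) :
    ∃ t : ℝ, a * exp (r * t) < K := by
  have : Tendsto (fun t => a * exp (r * t)) atBot (nhds 0) := by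
    simpa using (tendsto_exp_atBot.comp (tendsto_id.const_mul_atBot hr)).const_mul a
  exact (this.eventually (gt_mem_nhds hK)).exists

theorem connectedComponentIn_ne_of_isOpen {X : Type*} [TopologicalSpace X] {S U V : Set X}
    (hU : IsOpen U) (hV : IsOpen V) (hUV : Disjoint U V) (hS : S ⊆ U ∪ V) {x y : X}
    (hx : x ∈ U) (hy : y ∈ S) (hyU : y ∉ U) :
    connectedComponentIn S x ≠ connectedComponentIn S y := by
  intro h
  have hyx : y ∈ connectedComponentIn S x := h ▸ mem_connectedComponentIn hy
  have hsub : connectedComponentIn S x ⊆ U :=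
    isPreconnected_connectedComponentIn.subset_left_of_subset_union hU hV hUV
      ((connectedComponentIn_subset S x).trans hS)
      ⟨x, mem_connectedComponentIn (connectedComponentIn_nonempty_iff.1 ⟨y, hyx⟩), hx⟩
  exact hyU (hsub hyx)

/-- For the trinomial c₀ + c₁z₁ⁿ + c₂z₂ⁿ, the three sets of points where one of
the monomials is lopsidedly dominant are nonempty subsets of the amoeba
complement, and points dominant for different vertices lie in different
connected components: the complement has at least three components, one
unbounded in each of the directions (0,0), (n,0), (0,n). -/
theorem trinomial_amoeba_compl_three_components (n : ℕ) (hn : 1 ≤ n)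
    (c₀ c₁ c₂ : ℂ) (h₀ : c₀ ≠ 0) (h₁ : c₁ ≠ 0) (h₂ : c₂ ≠ 0) :
    let f : (Fin 2 → ℂ) → ℂ := fun z => c₀ + c₁ * z 0 ^ n + c₂ * z 1 ^ n
    let L₀ : Set (Fin 2 → ℝ) := {x | ‖c₁‖ * Real.exp (n * x 0) +
      ‖c₂‖ * Real.exp (n * x 1) < ‖c₀‖}
    let L₁ : Set (Fin 2 → ℝ) := {x | ‖c₀‖ +
      ‖c₂‖ * Real.exp (n * x 1) < ‖c₁‖ * Real.exp (n * x 0)}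
    let L₂ : Set (Fin 2 → ℝ) := {x | ‖c₀‖ +
      ‖c₁‖ * Real.exp (n * x 0) < ‖c₂‖ * Real.exp (n * x 1)}
    L₀.Nonempty ∧ L₁.Nonempty ∧ L₂.Nonempty ∧
    L₀ ⊆ (amoebaOf 2 f)ᶜ ∧ L₁ ⊆ (amoebaOf 2 f)ᶜ ∧ L₂ ⊆ (amoebaOf 2 f)ᶜ ∧
    (∀ x ∈ L₀, ∀ y ∈ L₁,
      connectedComponentIn (amoebaOf 2 f)ᶜ x ≠ connectedComponentIn (amoebaOf 2 f)ᶜ y) ∧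
    (∀ x ∈ L₀, ∀ y ∈ L₂,
      connectedComponentIn (amoebaOf 2 f)ᶜ x ≠ connectedComponentIn (amoebaOf 2 f)ᶜ y) ∧
    (∀ x ∈ L₁, ∀ y ∈ L₂,
      connectedComponentIn (amoebaOf 2 f)ᶜ x ≠ connectedComponentIn (amoebaOf 2 f)ᶜ y) := by
  intro f L₀ L₁ L₂
  have hn₀ : n ≠ 0 := Nat.one_le_iff_ne_zero.1 hn
  have hn' : (0 : ℝ) < n := by positivity
  have hcompl : (amoebaOf 2 f)ᶜ = L₀ ∪ L₁ ∪ L₂ := by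
    ext x
    simp only [f, Set.mem_compl_iff, mem_amoebaOf_trinomial_iff hn₀ c₀ h₁ h₂, not_and_or, not_le,
      Set.mem_union, Set.mem_ofPred_eq, L₀, L₁, L₂, or_assoc]
  have hopen₀ : IsOpen L₀ := isOpen_lt (by fun_prop) (by fun_prop)
  have hopen₁ : IsOpen L₁ := isOpen_lt (by fun_prop) (by fun_prop)
  have hopen₂ : IsOpen L₂ := isOpen_lt (by fun_prop) (by fun_prop)
  have hpos (c : ℂ) (t : ℝ) : 0 ≤ ‖c‖ * exp (n * t) := by positivity
  have h₀₁ : Disjoint L₀ L₁ := Set.disjoint_left.2 fun x hx hx' => by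
    simp only [L₀, L₁, Set.mem_ofPred_eq] at hx hx'; linarith [hpos c₂ (x 1)]
  have h₀₂ : Disjoint L₀ L₂ := Set.disjoint_left.2 fun x hx hx' => by
    simp only [L₀, L₂, Set.mem_ofPred_eq] at hx hx'; linarith [hpos c₁ (x 0)]
  have h₁₂ : Disjoint L₁ L₂ := Set.disjoint_left.2 fun x hx hx' => by
    simp only [L₁, L₂, Set.mem_ofPred_eq] at hx hx'; linarith [norm_nonneg c₀]
  have hL₀ : L₀ ⊆ (amoebaOf 2 f)ᶜ := hcompl ▸ Set.subset_union_left.trans Set.subset_union_left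
  have hL₁ : L₁ ⊆ (amoebaOf 2 f)ᶜ := hcompl ▸ Set.subset_union_right.trans Set.subset_union_left
  have hL₂ : L₂ ⊆ (amoebaOf 2 f)ᶜ := hcompl ▸ Set.subset_union_right
  obtain ⟨t, ht⟩ := exists_mul_exp_mul_lt (‖c₁‖ + ‖c₂‖) hn' (norm_pos_iff.2 h₀)
  obtain ⟨s₁, hs₁⟩ := exists_lt_mul_exp_mul (norm_pos_iff.2 h₁) hn' (‖c₀‖ + ‖c₂‖)
  obtain ⟨s₂, hs₂⟩ := exists_lt_mul_exp_mul (norm_pos_iff.2 h₂) hn' (‖c₀‖ + ‖c₁‖)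
  refine ⟨⟨fun _ => t, by simpa [L₀, add_mul] using ht⟩, ⟨![s₁, 0], by simpa [L₁] using hs₁⟩,
    ⟨![0, s₂], by simpa [L₂] using hs₂⟩, hL₀, hL₁, hL₂, fun x hx y hy => ?_,
    fun x hx y hy => ?_, fun x hx y hy => ?_⟩
  · exact connectedComponentIn_ne_of_isOpen hopen₀ (hopen₁.union hopen₂) (h₀₁.union_right h₀₂)
      (by rw [hcompl, Set.union_assoc]) hx (hL₁ hy) (Set.disjoint_right.1 h₀₁ hy)
  · exact connectedComponentIn_ne_of_isOpen hopen₀ (hopen₁.union hopen₂) (h₀₁.union_right h₀₂)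
      (by rw [hcompl, Set.union_assoc]) hx (hL₂ hy) (Set.disjoint_right.1 h₀₂ hy)
  · exact connectedComponentIn_ne_of_isOpen hopen₁ (hopen₀.union hopen₂)
      (h₀₁.symm.union_right h₁₂) (by rw [hcompl, Set.union_comm L₀, Set.union_assoc]) hx (hL₂ hy)
      (Set.disjoint_right.1 h₁₂ hy)
end
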